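/- arXiv:0801.3878 — 8 statements merged into one kernel-verified Lean document; each statement's English description precedes it below -/
import Mathlib

section
/- Let U be a finite set, A a finite set of functions A: U^n → V, and p_A a probability distribution on A. Suppose (A, p_A) satisfies the hash inequality: for all subsets T, T' of U^n, the sum over u∈T, u'∈T' of p_A({A : Au = Au'}) is at most |T∩T'| + |T||T'|α/|Im A| + min{|T|,|T'|}β, where Im A is the union over A∈A of the images of A. Then for any subset G of U^n and any u ∈ U^n, the probability p_A({A : there exists u' ∈ G \ {u} with Au' = Au}) ≤ |G|α/|Im A| + β. -/
/-!
A union bound over the colliding points `u' ∈ G \ {u}` bounds the collision probability by the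
left-hand side of the hash inequality for `T = G \ {u}` and `T' = {u}`; since `T ∩ T' = ∅` and
`min |T| 1 ≤ 1`, its right-hand side is at most `|G| α / |Im 𝒜| + β`.
-/

open scoped Classical BigOperators

namespace Finset

variable {ι κ M : Type*} [AddCommMonoid M] [PartialOrder M] [IsOrderedAddMonoid M]

theorem sum_filter_exists_le_sum_sum_filter {s : Finset ι} {T : Finset κ} {P : ι → κ → Prop}
    [∀ i k, Decidable (P i k)] [DecidablePred fun i => ∃ k ∈ T, P i k] {f : ι → M}
    (hf : ∀ i ∈ s, 0 ≤ f i) :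
    ∑ i ∈ s.filter (fun i => ∃ k ∈ T, P i k), f i ≤ ∑ k ∈ T, ∑ i ∈ s.filter (P · k), f i := by
  simp_rw [sum_filter]
  rw [sum_comm]
  gcongr with i hi
  have hterm_nonneg : ∀ k ∈ T, 0 ≤ if P i k then f i else 0 := fun k _ => by
    split_ifs
    exacts [hf i hi, le_rfl]
  split_ifs with hex
  · obtain ⟨k, hk, hik⟩ := hex
    simpa [hik] using single_le_sum hterm_nonneg hk
  · exact sum_nonneg hterm_nonneg

end Finset

theorem hash_collision_resistant_general
    {U V : Type} [DecidableEq V]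
    (n : ℕ) (𝒜 : Finset ((Fin n → U) → V)) (p : ((Fin n → U) → V) → ℝ)
    (hp0 : ∀ A, 0 ≤ p A)
    (α β : ℝ) (hα : 0 ≤ α) (hβ : 0 ≤ β)
    (Im : Finset V)
    (hhash : ∀ T T' : Finset (Fin n → U),
      (∑ u ∈ T, ∑ u' ∈ T',
        ∑ A ∈ 𝒜.filter (fun A => A u = A u'), p A)
      ≤ ((T ∩ T').card : ℝ) + (T.card : ℝ) * (T'.card : ℝ) * α / (Im.card : ℝ)
        + (min T.card T'.card : ℝ) * β) :
    ∀ (G : Finset (Fin n → U)) (u : Fin n → U),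
      (∑ A ∈ 𝒜.filter (fun A => ∃ u' ∈ G \ {u}, A u' = A u), p A)
      ≤ (G.card : ℝ) * α / (Im.card : ℝ) + β := by
  intro G u
  have hcard : ((G \ {u}).card : ℝ) ≤ G.card := by
    exact_mod_cast Finset.card_le_card Finset.sdiff_subset
  calc (∑ A ∈ 𝒜.filter (fun A => ∃ u' ∈ G \ {u}, A u' = A u), p A)
      ≤ ∑ v ∈ G \ {u}, ∑ A ∈ 𝒜.filter (fun A => A v = A u), p A :=
        Finset.sum_filter_exists_le_sum_sum_filter fun A _ => hp0 A
    _ ≤ ((G \ {u}).card : ℝ) * α / Im.card + (min (G \ {u}).card 1 : ℕ) * β := by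
        simpa [Finset.sdiff_inter_self] using hhash (G \ {u}) {u}
    _ ≤ (G.card : ℝ) * α / Im.card + β := by
        have hmin : ((min (G \ {u}).card 1 : ℕ) : ℝ) ≤ 1 := by exact_mod_cast min_le_right _ _
        gcongr
        exact mul_le_of_le_one_left hβ hmin

/-- Collision-resistant property derived from the (α,β)-hash inequality
    (Lemma 1 of the paper). -/
theorem hash_collision_resistant
    {U V : Type} [Fintype U] [Fintype V] [DecidableEq V]
    (n : ℕ) (𝒜 : Finset ((Fin n → U) → V)) (p : ((Fin n → U) → V) → ℝ)
    (hp0 : ∀ A, 0 ≤ p A) (hp1 : ∑ A ∈ 𝒜, p A = 1)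
    (α β : ℝ) (hα : 0 ≤ α) (hβ : 0 ≤ β)
    (Im : Finset V)
    (hIm : Im = 𝒜.biUnion (fun A => Finset.image A Finset.univ))
    (hhash : ∀ T T' : Finset (Fin n → U),
      (∑ u ∈ T, ∑ u' ∈ T',
        ∑ A ∈ 𝒜.filter (fun A => A u = A u'), p A)
      ≤ ((T ∩ T').card : ℝ) + (T.card : ℝ) * (T'.card : ℝ) * α / (Im.card : ℝ)
        + (min T.card T'.card : ℝ) * β) :
    ∀ (G : Finset (Fin n → U)) (u : Fin n → U),
      (∑ A ∈ 𝒜.filter (fun A => ∃ u' ∈ G \ {u}, A u' = A u), p A)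
      ≤ (G.card : ℝ) * α / (Im.card : ℝ) + β :=
  hash_collision_resistant_general n 𝒜 p hp0 α β hα hβ Im hhash
end

section
/- Let (A, p_A) satisfy the (α,β)-hash inequality and let p_C be uniform on Im A, independent of A. Then for any nonempty subset T ⊆ U^n, the probability p_{AC}({(A,c) : T ∩ C_A(c) = ∅}) ≤ α − 1 + |Im A|(β+1)/|T|, where C_A(c) = {u : Au = c}. -/
/-!
Weight each pair `(A, c) ∈ 𝒜 × Im` by `p A` and let `X (A, c) = |T ∩ C_A(c)|`. The first moment
`∑ p A · X` is `|T|`, and the second moment `∑ p A · X²` is the collision sum of `T` with itself,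
which the hash inequality bounds by `|T| + |T|²α/|Im| + |T|β`. By Cauchy–Schwarz the square of the
first moment is at most the mass of `{X ≠ 0}` times the second moment, and that mass is
`|Im| (1 - q)`, where `q` is the probability that `T ∩ C_A(c) = ∅`. Solving for `q` gives the bound.
-/

namespace Finset

theorem sq_sum_mul_le_sum_filter_mul_sum_mul_sq {ι R : Type*} [CommSemiring R]
    [LinearOrder R] [IsStrictOrderedRing R] [ExistsAddOfLE R]
    (s : Finset ι) (P : ι → Prop) [DecidablePred P] {w X : ι → R}
    (hw : ∀ i ∈ s, 0 ≤ w i) (hX : ∀ i ∈ s, ¬ P i → X i = 0) :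
    (∑ i ∈ s, w i * X i) ^ 2 ≤ (∑ i ∈ s with P i, w i) * ∑ i ∈ s, w i * X i ^ 2 := by
  rw [sum_filter]
  refine sum_sq_le_sum_mul_sum_of_sq_le_mul s (fun i hi => ?_) (fun i hi => ?_)
    (fun i hi => le_of_eq ?_)
  · split_ifs <;> simp [hw i hi]
  · exact mul_nonneg (hw i hi) (sq_nonneg _)
  · by_cases h : P i
    · rw [if_pos h]; ring
    · rw [if_neg h, hX i hi h]; ring

end Finset

section Fibers

open Finset

variable {ι V : Type*} [DecidableEq V] {T : Finset ι} {Im : Finset V}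

theorem sum_card_fiberwise_sq_eq {A : ι → V} (hA : ∀ u ∈ T, A u ∈ Im) :
    ∑ c ∈ Im, #{u ∈ T | A u = c} ^ 2 = ∑ u ∈ T, #{u' ∈ T | A u = A u'} := by
  calc ∑ c ∈ Im, #{u ∈ T | A u = c} ^ 2
      = ∑ c ∈ Im, ∑ u ∈ T with A u = c, #{u' ∈ T | A u' = c} := by
        simp only [sq, sum_const, smul_eq_mul]
    _ = ∑ c ∈ Im, ∑ u ∈ T with A u = c, #{u' ∈ T | A u = A u'} := by
        refine sum_congr rfl fun c _ => sum_congr rfl fun u hu => ?_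
        rw [(mem_filter.mp hu).2]
        simp only [eq_comm]
    _ = ∑ u ∈ T, #{u' ∈ T | A u = A u'} := sum_fiberwise_of_maps_to hA _

variable {𝒜 : Finset (ι → V)} (p : (ι → V) → ℝ)

theorem sum_product_mul_card_filter (hA : ∀ A ∈ 𝒜, ∀ u ∈ T, A u ∈ Im) :
    ∑ x ∈ 𝒜 ×ˢ Im, p x.1 * #{u ∈ T | x.1 u = x.2} = (∑ A ∈ 𝒜, p A) * #T := by
  rw [sum_product, sum_mul]
  dsimp only
  refine sum_congr rfl fun A hA' => ?_
  rw [← mul_sum, card_eq_sum_card_fiberwise (hA A hA')]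
  push_cast
  rfl

theorem sum_product_mul_card_filter_sq (hA : ∀ A ∈ 𝒜, ∀ u ∈ T, A u ∈ Im) :
    ∑ x ∈ 𝒜 ×ˢ Im, p x.1 * (#{u ∈ T | x.1 u = x.2} : ℝ) ^ 2
      = ∑ u ∈ T, ∑ u' ∈ T, ∑ A ∈ 𝒜 with A u = A u', p A := by
  calc ∑ x ∈ 𝒜 ×ˢ Im, p x.1 * (#{u ∈ T | x.1 u = x.2} : ℝ) ^ 2
      = ∑ A ∈ 𝒜, ∑ u ∈ T, ∑ u' ∈ T, if A u = A u' then p A else 0 := by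
        rw [sum_product]
        dsimp only
        refine sum_congr rfl fun A hA' => ?_
        have h : ∑ c ∈ Im, (#{u ∈ T | A u = c} : ℝ) ^ 2
            = ∑ u ∈ T, (#{u' ∈ T | A u = A u'} : ℝ) := by
          exact_mod_cast sum_card_fiberwise_sq_eq (hA A hA')
        rw [← mul_sum, h, mul_sum]
        refine sum_congr rfl fun u _ => ?_
        rw [card_filter, Nat.cast_sum, mul_sum]
        push_cast
        simp only [mul_boole]
    _ = ∑ u ∈ T, ∑ u' ∈ T, ∑ A ∈ 𝒜 with A u = A u', p A := by
        simp only [sum_filter]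
        rw [sum_comm]
        exact sum_congr rfl fun u _ => sum_comm

theorem sum_product_filter_ne_empty [DecidableEq ι] (hp1 : ∑ A ∈ 𝒜, p A = 1)
    (hcard : (#Im : ℝ) ≠ 0) :
    ∑ x ∈ 𝒜 ×ˢ Im with ¬ {u ∈ T | x.1 u = x.2} = ∅, p x.1
      = #Im * (1 - ∑ A ∈ 𝒜, ∑ c ∈ Im,
          p A * (1 / #Im) * if {u ∈ T | A u = c} = ∅ then 1 else 0) := by
  have htotal : ∑ x ∈ 𝒜 ×ˢ Im, p x.1 = #Im := by
    rw [sum_product, ← mul_one (#Im : ℝ), ← hp1, mul_sum]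
    simp only [sum_const, nsmul_eq_mul]
  have hempty : ∑ x ∈ 𝒜 ×ˢ Im with {u ∈ T | x.1 u = x.2} = ∅, p x.1
      = ∑ A ∈ 𝒜, ∑ c ∈ Im, p A * if {u ∈ T | A u = c} = ∅ then 1 else 0 := by
    simp only [sum_filter, sum_product, mul_boole]
  have hsplit := sum_filter_add_sum_filter_not (𝒜 ×ˢ Im)
    (fun x => {u ∈ T | x.1 u = x.2} = ∅) (fun x => p x.1)
  have hnormalize : ∑ A ∈ 𝒜, ∑ c ∈ Im,
      p A * (1 / #Im) * (if {u ∈ T | A u = c} = ∅ then 1 else 0 : ℝ)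
      = (∑ A ∈ 𝒜, ∑ c ∈ Im, p A * if {u ∈ T | A u = c} = ∅ then 1 else 0) / #Im := by
    simp only [sum_div, mul_one_div, div_mul_eq_mul_div]
  rw [hnormalize, ← hempty]
  field_simp
  linarith

end Fibers

theorem le_sub_one_add_div_of_sq_le {m t E α β : ℝ} (hm : 0 < m) (ht : 0 < t) (hE : 0 ≤ E)
    (hE1 : 0 ≤ 1 - E) (h : t ^ 2 ≤ m * (1 - E) * (t + t * t * α / m + t * β)) :
    E ≤ α - 1 + m * (β + 1) / t := by
  set D := m * (1 + β) + t * α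
  have hD : t ≤ (1 - E) * D := by
    refine le_of_mul_le_mul_left ?_ ht
    calc t * t = t ^ 2 := by ring
      _ ≤ m * (1 - E) * (t + t * t * α / m + t * β) := h
      _ = t * ((1 - E) * D) := by field_simp; ring
  have htD : t ≤ D := by
    rcases le_total 0 D with hD0 | hD0
    · nlinarith [mul_nonneg hE hD0]
    · nlinarith [mul_nonneg hE1 (neg_nonneg.mpr hD0)]
  rw [show α - 1 + m * (β + 1) / t = (D - t) / t by field_simp; ring, le_div_iff₀ ht]
  nlinarith [mul_le_mul_of_nonneg_left htD hE]

open scoped Classical BigOperators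

theorem hash_saturating_general
    {U V : Type} [Fintype U] [DecidableEq V]
    (n : ℕ) (𝒜 : Finset ((Fin n → U) → V)) (p : ((Fin n → U) → V) → ℝ)
    (hp0 : ∀ A, 0 ≤ p A) (hp1 : ∑ A ∈ 𝒜, p A = 1)
    (α β : ℝ)
    (Im : Finset V)
    (hIm : Im = 𝒜.biUnion (fun A => Finset.image A Finset.univ))
    (hhash : ∀ T T' : Finset (Fin n → U),
      (∑ u ∈ T, ∑ u' ∈ T',
        ∑ A ∈ 𝒜.filter (fun A => A u = A u'), p A)
      ≤ ((T ∩ T').card : ℝ) + (T.card : ℝ) * (T'.card : ℝ) * α / (Im.card : ℝ)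
        + (min T.card T'.card : ℝ) * β) :
    ∀ T : Finset (Fin n → U), T.Nonempty →
      (∑ A ∈ 𝒜, ∑ c ∈ Im, p A * (1 / (Im.card : ℝ)) *
          (if T.filter (fun u => A u = c) = ∅ then 1 else 0))
      ≤ α - 1 + (Im.card : ℝ) * (β + 1) / (T.card : ℝ) := by
  intro T ⟨u₀, hu₀⟩
  have hA : ∀ A ∈ 𝒜, ∀ u ∈ T, A u ∈ Im := fun A hA u _ =>
    hIm ▸ Finset.mem_biUnion.2 ⟨A, hA, Finset.mem_image_of_mem A (Finset.mem_univ u)⟩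
  obtain ⟨A₀, hA₀⟩ : 𝒜.Nonempty := Finset.nonempty_of_sum_ne_zero (hp1 ▸ one_ne_zero)
  have hm : (0 : ℝ) < Im.card := Nat.cast_pos.2 (Finset.card_pos.2 ⟨_, hA A₀ hA₀ u₀ hu₀⟩)
  have ht : (0 : ℝ) < T.card := Nat.cast_pos.2 (Finset.card_pos.2 ⟨u₀, hu₀⟩)
  have hmass := sum_product_filter_ne_empty (T := T) p hp1 hm.ne'
  have hCS := Finset.sq_sum_mul_le_sum_filter_mul_sum_mul_sq (𝒜 ×ˢ Im)
    (fun x => ¬ T.filter (fun u => x.1 u = x.2) = ∅) (w := fun x => p x.1)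
    (X := fun x => ((T.filter fun u => x.1 u = x.2).card : ℝ))
    (fun x _ => hp0 x.1) (fun x _ hx => by simp only [not_not] at hx; simp [hx])
  rw [sum_product_mul_card_filter p hA, hp1, one_mul, hmass,
    sum_product_mul_card_filter_sq p hA] at hCS
  have hcollision := hhash T T
  rw [Finset.inter_self, min_self] at hcollision
  have hmass_nonneg := le_of_le_of_eq (Finset.sum_nonneg fun x _ => hp0 x.1) hmass
  refine le_sub_one_add_div_of_sq_le hm ht ?_ (nonneg_of_mul_nonneg_right hmass_nonneg hm)
    (hCS.trans (mul_le_mul_of_nonneg_left hcollision hmass_nonneg))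
  exact Finset.sum_nonneg fun A _ => Finset.sum_nonneg fun c _ =>
    mul_nonneg (mul_nonneg (hp0 A) (by positivity)) (by split_ifs <;> norm_num)

/-- Saturating property (Lemma 2 of the paper): if (𝒜,p) satisfies the
    (α,β)-hash inequality and c is uniform on Im 𝒜 independent of A, then
    for any nonempty T ⊆ U^n the probability that T ∩ C_A(c) = ∅ is at most
    α − 1 + |Im 𝒜|(β+1)/|T|. -/
theorem hash_saturating
    {U V : Type} [Fintype U] [Fintype V] [DecidableEq V]
    (n : ℕ) (𝒜 : Finset ((Fin n → U) → V)) (p : ((Fin n → U) → V) → ℝ)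
    (hp0 : ∀ A, 0 ≤ p A) (hp1 : ∑ A ∈ 𝒜, p A = 1)
    (α β : ℝ) (hα : 1 ≤ α) (hβ : 0 ≤ β)
    (Im : Finset V)
    (hIm : Im = 𝒜.biUnion (fun A => Finset.image A Finset.univ))
    (hhash : ∀ T T' : Finset (Fin n → U),
      (∑ u ∈ T, ∑ u' ∈ T',
        ∑ A ∈ 𝒜.filter (fun A => A u = A u'), p A)
      ≤ ((T ∩ T').card : ℝ) + (T.card : ℝ) * (T'.card : ℝ) * α / (Im.card : ℝ)
        + (min T.card T'.card : ℝ) * β) :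
    ∀ T : Finset (Fin n → U), T.Nonempty →
      (∑ A ∈ 𝒜, ∑ c ∈ Im, p A * (1 / (Im.card : ℝ)) *
          (if T.filter (fun u => A u = c) = ∅ then 1 else 0))
      ≤ α - 1 + (Im.card : ℝ) * (β + 1) / (T.card : ℝ) :=
  hash_saturating_general n 𝒜 p hp0 hp1 α β Im hIm hhash
end

section
/- Under the (α,β)-hash inequality for (A,p_A) with p_C uniform on Im A independent of A, for any nonempty subset T ⊆ U^n, the second moment bound holds: E_{A,C}[(Σ_{u∈T} 1[Au = C] − |T|/|Im A|)^2] ≤ |T|^2(α−1)/|Im A|^2 + |T|(β+1)/|Im A|. -/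
open scoped Classical BigOperators

/-!
Write `N_A(c) = #{u ∈ T | A u = c}` and `t = #T`, `m = #Im`. For each fixed `A` the fibre sizes
`N_A(c)` sum to `t` over `c ∈ Im`, and their squares sum to the number of colliding pairs
`#{(u, u') ∈ T × T | A u = A u'}`; hence the average over `c` of `(N_A(c) - t/m)²` equals
`(collisions - t²/m) / m`. Averaging over `A`, the expected number of collisions is exactly the
left-hand side of the hash inequality for `T' = T`, which is at most `t + t²α/m + tβ`.
-/

open Finset

theorem Finset.sum_sq_sub_sum_div_card {ι : Type*} (s : Finset ι) (f : ι → ℝ) :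
    ∑ i ∈ s, (f i - (∑ j ∈ s, f j) / #s) ^ 2
      = ∑ i ∈ s, f i ^ 2 - (∑ i ∈ s, f i) ^ 2 / #s := by
  rcases s.eq_empty_or_nonempty with rfl | hs
  · simp
  have hcard : (#s : ℝ) ≠ 0 := by exact_mod_cast hs.card_pos.ne'
  simp only [sub_sq, sum_add_distrib, sum_sub_distrib, ← sum_mul, ← mul_sum, sum_const,
    nsmul_eq_mul]
  field_simp
  ring

section Fibres

variable {α β : Type*} [DecidableEq β] (A : α → β) (T : Finset α) {S : Finset β}

theorem sum_sum_ite_eq_card (hS : ∀ u ∈ T, A u ∈ S) :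
    ∑ c ∈ S, ∑ u ∈ T, (if A u = c then (1 : ℝ) else 0) = #T := by
  rw [sum_comm, sum_congr rfl fun u hu => by rw [sum_ite_eq, if_pos (hS u hu)]]
  simp

theorem sum_sq_sum_ite_eq_collisions (hS : ∀ u ∈ T, A u ∈ S) :
    ∑ c ∈ S, (∑ u ∈ T, (if A u = c then (1 : ℝ) else 0)) ^ 2
      = ∑ u ∈ T, ∑ u' ∈ T, if A u = A u' then (1 : ℝ) else 0 := by
  simp only [sq, sum_mul_sum, ite_mul, one_mul, zero_mul]
  rw [sum_comm]
  refine sum_congr rfl fun u hu => ?_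
  rw [sum_comm]
  refine sum_congr rfl fun u' hu' => ?_
  rcases eq_or_ne (A u) (A u') with h | h
  · simp [h, hS u' hu']
  · simp [h, h.symm]

theorem sum_sq_sum_ite_sub_mean (hS : ∀ u ∈ T, A u ∈ S) :
    ∑ c ∈ S, (∑ u ∈ T, (if A u = c then (1 : ℝ) else 0) - #T / #S) ^ 2
      = (∑ u ∈ T, ∑ u' ∈ T, if A u = A u' then (1 : ℝ) else 0) - (#T : ℝ) ^ 2 / #S := by
  rw [← sum_sq_sum_ite_eq_collisions A T hS, ← sum_sum_ite_eq_card A T hS,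
    sum_sq_sub_sum_div_card]

end Fibres

theorem sum_mul_collisions_eq_sum_sum_sum_filter {α β : Type*} [DecidableEq β]
    (𝒜 : Finset (α → β)) (p : (α → β) → ℝ) (T : Finset α) :
    ∑ A ∈ 𝒜, p A * ∑ u ∈ T, ∑ u' ∈ T, (if A u = A u' then (1 : ℝ) else 0)
      = ∑ u ∈ T, ∑ u' ∈ T, ∑ A ∈ 𝒜.filter (fun A => A u = A u'), p A := by
  simp only [mul_sum, mul_ite, mul_one, mul_zero, sum_filter]
  rw [sum_comm]
  exact sum_congr rfl fun u _ => sum_comm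

theorem hash_second_moment_general
    {U V : Type} [Fintype U] [DecidableEq V]
    (n : ℕ) (𝒜 : Finset ((Fin n → U) → V)) (p : ((Fin n → U) → V) → ℝ)
    (hp1 : ∑ A ∈ 𝒜, p A = 1)
    (α β : ℝ)
    (Im : Finset V)
    (hIm : Im = 𝒜.biUnion (fun A => Finset.image A Finset.univ))
    (hhash : ∀ T T' : Finset (Fin n → U),
      (∑ u ∈ T, ∑ u' ∈ T',
        ∑ A ∈ 𝒜.filter (fun A => A u = A u'), p A)
      ≤ ((T ∩ T').card : ℝ) + (T.card : ℝ) * (T'.card : ℝ) * α / (Im.card : ℝ)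
        + (min T.card T'.card : ℝ) * β) :
    ∀ T : Finset (Fin n → U), T.Nonempty →
      (∑ A ∈ 𝒜, ∑ c ∈ Im, p A * (1 / (Im.card : ℝ)) *
          ((∑ u ∈ T, (if A u = c then (1 : ℝ) else 0))
            - (T.card : ℝ) / (Im.card : ℝ)) ^ 2)
      ≤ (T.card : ℝ) ^ 2 * (α - 1) / (Im.card : ℝ) ^ 2
        + (T.card : ℝ) * (β + 1) / (Im.card : ℝ) := by
  intro T _
  have hmem : ∀ A ∈ 𝒜, ∀ u ∈ T, A u ∈ Im := fun A hA u _ => by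
    rw [hIm]
    exact mem_biUnion.2 ⟨A, hA, mem_image_of_mem A (mem_univ u)⟩
  have hcoll := hhash T T
  rw [inter_self, min_self] at hcoll
  calc _ = ∑ A ∈ 𝒜, ((1 / #Im) * (p A * ∑ u ∈ T, ∑ u' ∈ T,
              (if A u = A u' then (1 : ℝ) else 0)) - (#T : ℝ) ^ 2 / #Im ^ 2 * p A) :=
        sum_congr rfl fun A hA => by
          rw [← mul_sum, sum_sq_sum_ite_sub_mean A T (hmem A hA)]
          ring
    _ = (1 / #Im) * ∑ u ∈ T, ∑ u' ∈ T, ∑ A ∈ 𝒜.filter (fun A => A u = A u'), p A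
          - (#T : ℝ) ^ 2 / #Im ^ 2 := by
        rw [sum_sub_distrib, ← mul_sum, ← mul_sum, hp1, mul_one,
          sum_mul_collisions_eq_sum_sum_sum_filter]
    _ ≤ (1 / #Im) * (#T + #T * #T * α / #Im + #T * β) - (#T : ℝ) ^ 2 / #Im ^ 2 := by
        gcongr
    _ = _ := by ring

/-- Second-moment bound used in the proof of the saturating property
    (Eq. (25) of the paper): under the (α,β)-hash inequality, with C uniform
    on Im 𝒜 and independent of A,
    E[(Σ_{u∈T} 1[Au = C] − |T|/|Im 𝒜|)²] ≤ |T|²(α−1)/|Im 𝒜|² + |T|(β+1)/|Im 𝒜|. -/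
theorem hash_second_moment
    {U V : Type} [Fintype U] [Fintype V] [DecidableEq V]
    (n : ℕ) (𝒜 : Finset ((Fin n → U) → V)) (p : ((Fin n → U) → V) → ℝ)
    (hp0 : ∀ A, 0 ≤ p A) (hp1 : ∑ A ∈ 𝒜, p A = 1)
    (α β : ℝ) (hα : 1 ≤ α) (hβ : 0 ≤ β)
    (Im : Finset V)
    (hIm : Im = 𝒜.biUnion (fun A => Finset.image A Finset.univ))
    (hhash : ∀ T T' : Finset (Fin n → U),
      (∑ u ∈ T, ∑ u' ∈ T',
        ∑ A ∈ 𝒜.filter (fun A => A u = A u'), p A)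
      ≤ ((T ∩ T').card : ℝ) + (T.card : ℝ) * (T'.card : ℝ) * α / (Im.card : ℝ)
        + (min T.card T'.card : ℝ) * β) :
    ∀ T : Finset (Fin n → U), T.Nonempty →
      (∑ A ∈ 𝒜, ∑ c ∈ Im, p A * (1 / (Im.card : ℝ)) *
          ((∑ u ∈ T, (if A u = c then (1 : ℝ) else 0))
            - (T.card : ℝ) / (Im.card : ℝ)) ^ 2)
      ≤ (T.card : ℝ) ^ 2 * (α - 1) / (Im.card : ℝ) ^ 2
        + (T.card : ℝ) * (β + 1) / (Im.card : ℝ) :=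
  hash_second_moment_general n 𝒜 p hp1 α β Im hIm hhash
end

section
/- Let (A, p_A) satisfy the (α_A, β_A)-hash inequality, p_C uniform on Im A independent of A. Then for any subset G ⊆ U^n and any u ∉ G, the probability p_{AC}({(A,c) : G ∩ C_A(c) ≠ ∅ and Au = c}) ≤ |G|α_A/|Im A|^2 + β_A/|Im A|. -/
open scoped Classical BigOperators

/-!
Since `A u ∈ Im 𝒜` for every `A ∈ 𝒜`, averaging over the uniform `c` costs a factor
`1 / |Im 𝒜|` and leaves the event that some `u' ∈ G` collides with `u` under `A`. A union
bound over `u' ∈ G` bounds its probability by the left side of the hash inequality for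
`T = {u}`, `T' = G`, whose diagonal term `|T ∩ T'|` vanishes because `u ∉ G`.
-/

open Finset

section

variable {X Y : Type*}

def SatisfiesHashInequality [DecidableEq X] [DecidableEq Y] (𝒜 : Finset (X → Y))
    (p : (X → Y) → ℝ) (α β m : ℝ) : Prop :=
  ∀ T T' : Finset X,
    (∑ u ∈ T, ∑ u' ∈ T', ∑ A ∈ 𝒜.filter (fun A => A u = A u'), p A)
      ≤ ((T ∩ T').card : ℝ) + (T.card : ℝ) * (T'.card : ℝ) * α / m
        + (min T.card T'.card : ℝ) * β

theorem SatisfiesHashInequality.sum_collision_le [DecidableEq X] [DecidableEq Y]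
    {𝒜 : Finset (X → Y)} {p : (X → Y) → ℝ} {α β m : ℝ}
    (hhash : SatisfiesHashInequality 𝒜 p α β m) (hβ : 0 ≤ β) {G : Finset X} {u : X}
    (hu : u ∉ G) :
    ∑ u' ∈ G, ∑ A ∈ 𝒜.filter (fun A => A u = A u'), p A ≤ #G * α / m + β := by
  have h := hhash {u} G
  rw [sum_singleton, singleton_inter_of_notMem hu] at h
  have hmin : (min (#{u}) (#G) : ℝ) * β ≤ β :=
    mul_le_of_le_one_left hβ (by simp)
  simpa using h.trans (add_le_add_right hmin _)

theorem sum_mul_ite_and_eq_of_mem {P : Y → Prop} [DecidablePred P] [DecidableEq Y]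
    {s : Finset Y} {a : Y} (ha : a ∈ s) (w : ℝ) :
    ∑ c ∈ s, w * (if P c ∧ a = c then 1 else 0) = w * if P a then 1 else 0 := by
  simp_rw [and_comm (a := P _), ite_and, mul_ite, mul_zero]
  rw [sum_ite_eq, if_pos ha]

theorem ite_nonempty_le_card (s : Finset X) : (if s.Nonempty then 1 else 0 : ℝ) ≤ #s := by
  split_ifs with hs
  · exact_mod_cast hs.card_pos
  · positivity

theorem sum_mul_card_filter_eq_sum_sum_filter [DecidableEq Y] (𝒜 : Finset (X → Y))
    (p : (X → Y) → ℝ) (G : Finset X) (u : X) :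
    ∑ A ∈ 𝒜, p A * #(G.filter (fun u' => A u' = A u))
      = ∑ u' ∈ G, ∑ A ∈ 𝒜.filter (fun A => A u = A u'), p A := by
  simp_rw [card_filter, Nat.cast_sum, mul_sum, sum_filter]
  rw [sum_comm]
  refine sum_congr rfl fun u' _ => sum_congr rfl fun A _ => ?_
  simp [eq_comm]

end

theorem hash_coset_hit_general
    {U V : Type} [Fintype U] [DecidableEq V]
    (n : ℕ) (𝒜 : Finset ((Fin n → U) → V)) (p : ((Fin n → U) → V) → ℝ)
    (hp0 : ∀ A, 0 ≤ p A)
    (α β : ℝ) (hβ : 0 ≤ β)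
    (Im : Finset V)
    (hIm : Im = 𝒜.biUnion (fun A => Finset.image A Finset.univ))
    (hhash : ∀ T T' : Finset (Fin n → U),
      (∑ u ∈ T, ∑ u' ∈ T',
        ∑ A ∈ 𝒜.filter (fun A => A u = A u'), p A)
      ≤ ((T ∩ T').card : ℝ) + (T.card : ℝ) * (T'.card : ℝ) * α / (Im.card : ℝ)
        + (min T.card T'.card : ℝ) * β) :
    ∀ (G : Finset (Fin n → U)) (u : Fin n → U), u ∉ G →
      (∑ A ∈ 𝒜, ∑ c ∈ Im, p A * (1 / (Im.card : ℝ)) *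
          (if (G.filter (fun u' => A u' = c)).Nonempty ∧ A u = c then 1 else 0))
      ≤ (G.card : ℝ) * α / (Im.card : ℝ) ^ 2 + β / (Im.card : ℝ) := by
  intro G u hu
  set m : ℝ := (#Im : ℝ)
  have hhash' : SatisfiesHashInequality 𝒜 p α β m := hhash
  have hAu : ∀ A ∈ 𝒜, A u ∈ Im := fun A hA => by
    rw [hIm, mem_biUnion]
    exact ⟨A, hA, mem_image_of_mem A (mem_univ u)⟩
  rw [sum_congr rfl fun A hA => sum_mul_ite_and_eq_of_mem (hAu A hA) _]
  calc ∑ A ∈ 𝒜, p A * (1 / m) * (if (G.filter (fun u' => A u' = A u)).Nonempty then 1 else 0)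
      ≤ ∑ A ∈ 𝒜, p A * (1 / m) * #(G.filter (fun u' => A u' = A u)) :=
        sum_le_sum fun A _ =>
          mul_le_mul_of_nonneg_left (ite_nonempty_le_card _) (by have := hp0 A; positivity)
    _ = 1 / m * ∑ u' ∈ G, ∑ A ∈ 𝒜.filter (fun A => A u = A u'), p A := by
        rw [← sum_mul_card_filter_eq_sum_sum_filter, mul_sum]
        exact sum_congr rfl fun A _ => by ring
    _ ≤ 1 / m * (#G * α / m + β) :=
        mul_le_mul_of_nonneg_left (hhash'.sum_collision_le hβ hu) (by positivity)
    _ = #G * α / m ^ 2 + β / m := by ring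

/-- Lemma 3 of the paper: under the (α_A,β_A)-hash inequality, with c uniform
    on Im 𝒜 independent of A, for any G ⊆ U^n and u ∉ G,
    P_{A,c}(G ∩ C_A(c) ≠ ∅ and u ∈ C_A(c)) ≤ |G|α_A/|Im 𝒜|² + β_A/|Im 𝒜|. -/
theorem hash_coset_hit
    {U V : Type} [Fintype U] [Fintype V] [DecidableEq V]
    (n : ℕ) (𝒜 : Finset ((Fin n → U) → V)) (p : ((Fin n → U) → V) → ℝ)
    (hp0 : ∀ A, 0 ≤ p A) (hp1 : ∑ A ∈ 𝒜, p A = 1)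
    (α β : ℝ) (hα : 0 ≤ α) (hβ : 0 ≤ β)
    (Im : Finset V)
    (hIm : Im = 𝒜.biUnion (fun A => Finset.image A Finset.univ))
    (hhash : ∀ T T' : Finset (Fin n → U),
      (∑ u ∈ T, ∑ u' ∈ T',
        ∑ A ∈ 𝒜.filter (fun A => A u = A u'), p A)
      ≤ ((T ∩ T').card : ℝ) + (T.card : ℝ) * (T'.card : ℝ) * α / (Im.card : ℝ)
        + (min T.card T'.card : ℝ) * β) :
    ∀ (G : Finset (Fin n → U)) (u : Fin n → U), u ∉ G →
      (∑ A ∈ 𝒜, ∑ c ∈ Im, p A * (1 / (Im.card : ℝ)) *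
          (if (G.filter (fun u' => A u' = c)).Nonempty ∧ A u = c then 1 else 0))
      ≤ (G.card : ℝ) * α / (Im.card : ℝ) ^ 2 + β / (Im.card : ℝ) :=
  hash_coset_hit_general n 𝒜 p hp0 α β hβ Im hIm hhash
end

section
/- Let (A, p_A) and (B, p_B) be ensembles of functions on U^n with p_C uniform on Im A, all independent, where (B, p_B) satisfies the (α_B, β_B)-hash inequality. Suppose for each pair (A, c) a point u_{A,c} ∈ U^n is given. Then for any G ⊆ U^n, p_{ABC}({(A,B,c) : (G \ {u_{A,c}}) ∩ C_{AB}(c, B u_{A,c}) ≠ ∅}) ≤ |G| α_B / (|Im A| |Im B|) + β_B, where C_{AB}(c,b) := {u : Au = c and Bu = b}. -/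
/-!
Fix `A` and `c` and write `u₀ = u_{A,c}`, `T = {u ∈ G \ {u₀} | A u = c}`. The event is that `B`
sends some `u ∈ T` to `B u₀`; by the union bound and the hash inequality for the pair
`({u₀}, T)`, whose intersection is empty, its probability over `B` is at most
`|T| α_B / |Im ℬ| + β_B`. The sets `T` for different `c` are disjoint subsets of `G`, so
averaging over `c` uniform on `Im 𝒜` gives the bound, uniformly in `A`.
-/

open Finset

theorem ite_exists_le_sum_ite {α M : Type*} [AddCommMonoid M] [PartialOrder M]
    [IsOrderedAddMonoid M] (T : Finset α) (P : α → Prop) [DecidablePred P]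
    [Decidable (∃ a ∈ T, P a)] {x : M} (hx : 0 ≤ x) :
    (if ∃ a ∈ T, P a then x else 0) ≤ ∑ a ∈ T, if P a then x else 0 := by
  have hnonneg : ∀ a ∈ T, 0 ≤ if P a then x else 0 := fun a _ => by
    split_ifs
    exacts [hx, le_rfl]
  split_ifs with h
  · obtain ⟨a, ha, hPa⟩ := h
    simpa only [if_pos hPa] using single_le_sum hnonneg ha
  · exact sum_nonneg hnonneg

theorem sum_card_filter_sdiff_singleton_le {X W : Type*} [DecidableEq X] [DecidableEq W]
    (G : Finset X) (A : X → W) (S : Finset W) (u : W → X) :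
    ∑ c ∈ S, #((G \ {u c}).filter (A · = c)) ≤ #G :=
  calc ∑ c ∈ S, #((G \ {u c}).filter (A · = c))
      ≤ ∑ c ∈ S, #(G.filter (A · = c)) :=
        sum_le_sum fun _ _ => card_le_card (filter_subset_filter _ sdiff_subset)
    _ = #(G.filter (A · ∈ S)) := sum_card_fiberwise_eq_card_filter G S A
    _ ≤ #G := card_filter_le G _

/-- The `(α, β)`-hash inequality of the paper, with `M` standing for `|Im ℬ|`. -/
def HashInequality {X V : Type*} [DecidableEq X] [DecidableEq V] (ℬ : Finset (X → V))
    (p : (X → V) → ℝ) (α β M : ℝ) : Prop :=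
  ∀ T T' : Finset X,
    (∑ u ∈ T, ∑ u' ∈ T', ∑ B ∈ ℬ.filter (fun B => B u = B u'), p B)
      ≤ (#(T ∩ T') : ℝ) + (#T : ℝ) * (#T' : ℝ) * α / M + (min #T #T' : ℝ) * β

namespace HashInequality

variable {X V W : Type*} [DecidableEq X] [DecidableEq V] [DecidableEq W]
  {ℬ : Finset (X → V)} {p : (X → V) → ℝ} {α β M : ℝ}

theorem sum_sum_filter_eq_le (h : HashInequality ℬ p α β M) (hβ : 0 ≤ β) {u₀ : X}
    {T : Finset X} (hu₀ : u₀ ∉ T) :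
    ∑ u ∈ T, ∑ B ∈ ℬ.filter (fun B => B u₀ = B u), p B ≤ #T * α / M + β := by
  have hmin : (min 1 #T : ℝ) * β ≤ β := mul_le_of_le_one_left hβ (min_le_left _ _)
  have := h {u₀} T
  simp only [sum_singleton, singleton_inter_of_notMem hu₀, card_empty, card_singleton,
    Nat.cast_zero, Nat.cast_one, zero_add, one_mul] at this
  linarith

theorem sum_mul_ite_exists_eq_le (h : HashInequality ℬ p α β M) (hp : ∀ B, 0 ≤ p B)
    (hβ : 0 ≤ β) {u₀ : X} {T : Finset X} (hu₀ : u₀ ∉ T) :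
    ∑ B ∈ ℬ, p B * (if ∃ u ∈ T, B u = B u₀ then 1 else 0) ≤ #T * α / M + β :=
  calc ∑ B ∈ ℬ, p B * (if ∃ u ∈ T, B u = B u₀ then 1 else 0)
      ≤ ∑ B ∈ ℬ, ∑ u ∈ T, if B u₀ = B u then p B else 0 := by
        refine sum_le_sum fun B _ => ?_
        simp only [mul_ite, mul_one, mul_zero, eq_comm (a := B u₀)]
        exact ite_exists_le_sum_ite T _ (hp B)
    _ = ∑ u ∈ T, ∑ B ∈ ℬ.filter (fun B => B u₀ = B u), p B := by
        rw [sum_comm]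
        simp only [sum_filter]
    _ ≤ #T * α / M + β := h.sum_sum_filter_eq_le hβ hu₀

theorem sum_mul_ite_exists_coset_le (h : HashInequality ℬ p α β M) (hp : ∀ B, 0 ≤ p B)
    (hβ : 0 ≤ β) (G : Finset X) (A : X → W) (c : W) (u₀ : X) :
    ∑ B ∈ ℬ, p B * (if ∃ u ∈ G \ {u₀}, A u = c ∧ B u = B u₀ then 1 else 0)
      ≤ #((G \ {u₀}).filter (A · = c)) * α / M + β := by
  have hu₀ : u₀ ∉ (G \ {u₀}).filter (A · = c) := by simp
  convert h.sum_mul_ite_exists_eq_le hp hβ hu₀ using 4 with B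
  simp only [mem_filter, and_assoc]

theorem sum_sum_mul_ite_exists_coset_le (h : HashInequality ℬ p α β M) (hp : ∀ B, 0 ≤ p B)
    (hα : 0 ≤ α) (hβ : 0 ≤ β) (hM : 0 ≤ M) (G : Finset X) (A : X → W) (S : Finset W)
    (u : W → X) :
    ∑ c ∈ S, ∑ B ∈ ℬ, p B * (if ∃ x ∈ G \ {u c}, A x = c ∧ B x = B (u c) then 1 else 0)
      ≤ #G * α / M + #S * β :=
  calc _ ≤ ∑ c ∈ S, (#((G \ {u c}).filter (A · = c)) * α / M + β) :=
        sum_le_sum fun c _ => h.sum_mul_ite_exists_coset_le hp hβ G A c (u c)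
    _ = (∑ c ∈ S, (#((G \ {u c}).filter (A · = c)) : ℝ)) * α / M + #S * β := by
        rw [sum_add_distrib, sum_const, nsmul_eq_mul, ← sum_div, ← sum_mul]
    _ ≤ #G * α / M + #S * β := by
        gcongr
        exact_mod_cast sum_card_filter_sdiff_singleton_le G A S u

end HashInequality

open scoped Classical

theorem hash_joint_coset_general
    {U VA VB : Type}
    [DecidableEq VA] [DecidableEq VB]
    (n : ℕ)
    (𝒜 : Finset ((Fin n → U) → VA)) (pA : ((Fin n → U) → VA) → ℝ)
    (ℬ : Finset ((Fin n → U) → VB)) (pB : ((Fin n → U) → VB) → ℝ)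
    (hpA0 : ∀ A, 0 ≤ pA A) (hpA1 : ∑ A ∈ 𝒜, pA A = 1)
    (hpB0 : ∀ B, 0 ≤ pB B)
    (αB βB : ℝ) (hαB : 0 ≤ αB) (hβB : 0 ≤ βB)
    (ImA : Finset VA) (ImB : Finset VB)
    (hhashB : ∀ T T' : Finset (Fin n → U),
      (∑ u ∈ T, ∑ u' ∈ T',
        ∑ B ∈ ℬ.filter (fun B => B u = B u'), pB B)
      ≤ ((T ∩ T').card : ℝ) + (T.card : ℝ) * (T'.card : ℝ) * αB / (ImB.card : ℝ)
        + (min T.card T'.card : ℝ) * βB)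
    (usel : ((Fin n → U) → VA) → VA → (Fin n → U)) :
    ∀ G : Finset (Fin n → U),
      (∑ A ∈ 𝒜, ∑ B ∈ ℬ, ∑ c ∈ ImA,
        pA A * pB B * (1 / (ImA.card : ℝ)) *
          (if ∃ u' ∈ G \ {usel A c}, A u' = c ∧ B u' = B (usel A c)
            then 1 else 0))
      ≤ (G.card : ℝ) * αB / ((ImA.card : ℝ) * (ImB.card : ℝ)) + βB := by
  intro G
  rcases (#ImA).eq_zero_or_pos with hImA_zero | hImA_pos
  · simp [card_eq_zero.mp hImA_zero, hβB]
  calc _ = ∑ A ∈ 𝒜, pA A * ((1 / #ImA) * ∑ c ∈ ImA, ∑ B ∈ ℬ, pB B *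
        (if ∃ u' ∈ G \ {usel A c}, A u' = c ∧ B u' = B (usel A c) then 1 else 0)) := by
        refine sum_congr rfl fun A _ => ?_
        rw [sum_comm]
        simp only [mul_sum]
        exact sum_congr rfl fun c _ => sum_congr rfl fun B _ => by ring
    _ ≤ ∑ A ∈ 𝒜, pA A * ((1 / #ImA) * (#G * αB / #ImB + #ImA * βB)) := by
        gcongr with A
        · exact hpA0 A
        · exact HashInequality.sum_sum_mul_ite_exists_coset_le hhashB hpB0 hαB hβB
            (Nat.cast_nonneg _) G A ImA (usel A)
    _ = #G * αB / (#ImA * #ImB) + βB := by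
        rw [← sum_mul, hpA1, one_mul]
        field_simp

/-- Lemma 4 of the paper: two independent ensembles (𝒜,p_A) and (ℬ,p_B), c
    uniform on Im 𝒜; (ℬ,p_B) satisfies the (α_B,β_B)-hash inequality.  For a
    point u_{A,c} depending on (A,c),
    P_{A,B,c}((G \ {u_{A,c}}) ∩ C_{AB}(c, B u_{A,c}) ≠ ∅)
      ≤ |G| α_B / (|Im 𝒜| |Im ℬ|) + β_B. -/
theorem hash_joint_coset
    {U VA VB : Type} [Fintype U] [Fintype VA] [Fintype VB]
    [DecidableEq VA] [DecidableEq VB]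
    (n : ℕ)
    (𝒜 : Finset ((Fin n → U) → VA)) (pA : ((Fin n → U) → VA) → ℝ)
    (ℬ : Finset ((Fin n → U) → VB)) (pB : ((Fin n → U) → VB) → ℝ)
    (hpA0 : ∀ A, 0 ≤ pA A) (hpA1 : ∑ A ∈ 𝒜, pA A = 1)
    (hpB0 : ∀ B, 0 ≤ pB B) (hpB1 : ∑ B ∈ ℬ, pB B = 1)
    (αB βB : ℝ) (hαB : 0 ≤ αB) (hβB : 0 ≤ βB)
    (ImA : Finset VA) (ImB : Finset VB)
    (hImA : ImA = 𝒜.biUnion (fun A => Finset.image A Finset.univ))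
    (hImB : ImB = ℬ.biUnion (fun B => Finset.image B Finset.univ))
    (hhashB : ∀ T T' : Finset (Fin n → U),
      (∑ u ∈ T, ∑ u' ∈ T',
        ∑ B ∈ ℬ.filter (fun B => B u = B u'), pB B)
      ≤ ((T ∩ T').card : ℝ) + (T.card : ℝ) * (T'.card : ℝ) * αB / (ImB.card : ℝ)
        + (min T.card T'.card : ℝ) * βB)
    (usel : ((Fin n → U) → VA) → VA → (Fin n → U)) :
    ∀ G : Finset (Fin n → U),
      (∑ A ∈ 𝒜, ∑ B ∈ ℬ, ∑ c ∈ ImA,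
        pA A * pB B * (1 / (ImA.card : ℝ)) *
          (if ∃ u' ∈ G \ {usel A c}, A u' = c ∧ B u' = B (usel A c)
            then 1 else 0))
      ≤ (G.card : ℝ) * αB / ((ImA.card : ℝ) * (ImB.card : ℝ)) + βB :=
  hash_joint_coset_general n 𝒜 pA ℬ pB hpA0 hpA1 hpB0 αB βB hαB hβB ImA ImB hhashB usel
end

section
/- Let (A, p_A) and (B, p_B) be ensembles of l_A×n and l_B×n matrices over a finite field F_q whose zero-pattern probabilities p_{A,t} := p_A({A: Au = 0}) depend only on the type t(u), with hash constants (α_A, β_A) and (α_B, β_B) defined via the average spectrum. Then the product ensemble of functions u ↦ (Au, Bu) from F_q^n to F_q^{l_A+l_B} satisfies the hash inequality with constants α_{AB} = α_A α_B and β_{AB} = min{β_A, β_B}. -/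
open scoped Classical BigOperators

/-- The type (count of occurrences of each symbol) of a vector. -/
def vecType {F : Type} [DecidableEq F] {n : ℕ} (u : Fin n → F) : F → ℕ :=
  fun a => (Finset.univ.filter (fun i => u i = a)).card

/-- Probability that a random matrix from the ensemble annihilates u. -/
noncomputable def pZero {F : Type} [Field F] [Fintype F] [DecidableEq F]
    {l n : ℕ} (𝒜 : Finset (Matrix (Fin l) (Fin n) F))
    (p : Matrix (Fin l) (Fin n) F → ℝ) (u : Fin n → F) : ℝ :=
  ∑ A ∈ 𝒜.filter (fun A => A.mulVec u = 0), p A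

/-!
By linearity, `A u = A u'` iff `A (u - u') = 0`, and independence of the two ensembles makes the
collision probability of `u ↦ (A u, B u)` at `(u, u')` equal to `p_A(u - u') p_B(u - u')`.
The hash inequality then holds for any nonnegative "spectrum" `f` of differences with `f 0 ≤ 1`:
split the pairs `(u, u')` according to whether `u - u'` is zero (at most `|T ∩ T'|`), lies in `Ĥ`
(at most `max_Ĥ f` each), or is a nonzero low-weight vector; for fixed `u` the map `u' ↦ u - u'`
is injective, so the last part is at most `min(|T|, |T'|)` times the total low-weight mass.
For `f = p_A p_B` that maximum is at most `max_Ĥ p_A · max_Ĥ p_B`, and since `p_A, p_B ≤ 1`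
the low-weight mass is at most `min(β_A, β_B)`.
-/

open Finset

section HashFromSpectrum

variable {G : Type*} [AddCommGroup G] [Fintype G]

theorem sum_sum_sub_le_min_card_mul_sum {g : G → ℝ} (hg : ∀ v, 0 ≤ g v) (T T' : Finset G) :
    ∑ u ∈ T, ∑ u' ∈ T', g (u - u') ≤ min #T #T' * ∑ v, g v := by
  have hT : ∑ u ∈ T, ∑ u' ∈ T', g (u - u') ≤ #T * ∑ v, g v := by
    simpa using sum_le_sum fun u (_ : u ∈ T) =>
      (sum_le_univ_sum_of_nonneg (s := T') fun u' => hg (u - u')).trans_eq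
        ((Equiv.subLeft u).sum_comp g)
  have hT' : ∑ u ∈ T, ∑ u' ∈ T', g (u - u') ≤ #T' * ∑ v, g v := by
    rw [sum_comm]
    simpa using sum_le_sum fun u' (_ : u' ∈ T') =>
      (sum_le_univ_sum_of_nonneg (s := T) fun u => hg (u - u')).trans_eq
        ((Equiv.subRight u').sum_comp g)
  rw [Nat.cast_min, min_mul_of_nonneg _ _ (sum_nonneg fun v _ => hg v)]
  exact le_min hT hT'

theorem sum_sum_sub_le_of_forall_mem_le [DecidableEq G] {f : G → ℝ} (hf : ∀ v, 0 ≤ f v)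
    (hf0 : f 0 ≤ 1) {H : Finset G} {s : ℝ} (hs : ∀ v ∈ H, f v ≤ s) (hs0 : 0 ≤ s)
    (T T' : Finset G) :
    ∑ u ∈ T, ∑ u' ∈ T', f (u - u')
      ≤ #(T ∩ T') + #T * #T' * s
        + min #T #T' * ∑ v ∈ univ.filter (fun v => v ≠ 0 ∧ v ∉ H), f v := by
  set low : G → ℝ := fun v => if v ≠ 0 ∧ v ∉ H then f v else 0
  have pointwise (v : G) : f v ≤ (if v = 0 then 1 else 0) + s + low v := by
    by_cases h0 : v = 0
    · subst h0
      simp only [↓reduceIte, ne_eq, not_true_eq_false, false_and, add_zero, low]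
      linarith
    by_cases hH : v ∈ H
    · simp [low, h0, hH, hs v hH]
    · simp [low, h0, hH, hs0]
  have hdiag : ∑ u ∈ T, ∑ u' ∈ T', (if u - u' = 0 then (1 : ℝ) else 0) = #(T ∩ T') := by
    simp [sub_eq_zero, sum_ite_eq]
  have hlow : ∑ v, low v = ∑ v ∈ univ.filter (fun v => v ≠ 0 ∧ v ∉ H), f v :=
    (sum_filter _ _).symm
  calc ∑ u ∈ T, ∑ u' ∈ T', f (u - u')
      ≤ ∑ u ∈ T, ∑ u' ∈ T', ((if u - u' = 0 then 1 else 0) + s + low (u - u')) :=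
        sum_le_sum fun u _ => sum_le_sum fun u' _ => pointwise _
    _ = #(T ∩ T') + #T * #T' * s + ∑ u ∈ T, ∑ u' ∈ T', low (u - u') := by
        simp only [sum_add_distrib, hdiag, sum_const, nsmul_eq_mul]; ring
    _ ≤ _ := by
        rw [← hlow]
        gcongr
        exact sum_sum_sub_le_min_card_mul_sum (g := low) (fun v => ite_nonneg (hf v) le_rfl) _ _

end HashFromSpectrum

section Ensemble

variable {F : Type} [Field F] [Fintype F] [DecidableEq F] {l n : ℕ}
  {𝒜 : Finset (Matrix (Fin l) (Fin n) F)} {p : Matrix (Fin l) (Fin n) F → ℝ}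

theorem sum_filter_mulVec_eq_eq_pZero_sub (u u' : Fin n → F) :
    ∑ A ∈ 𝒜.filter (fun A => A.mulVec u = A.mulVec u'), p A = pZero 𝒜 p (u - u') := by
  rw [pZero]
  exact sum_congr (filter_congr fun A _ => by rw [Matrix.mulVec_sub, sub_eq_zero]) fun _ _ =>
    rfl

theorem pZero_nonneg (hp : ∀ A, 0 ≤ p A) (u : Fin n → F) : 0 ≤ pZero 𝒜 p u :=
  sum_nonneg fun A _ => hp A

theorem pZero_le_sum (hp : ∀ A, 0 ≤ p A) (u : Fin n → F) :
    pZero 𝒜 p u ≤ ∑ A ∈ 𝒜, p A :=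
  sum_le_sum_of_subset_of_nonneg (filter_subset _ _) fun A _ _ => hp A

theorem pZero_zero : pZero 𝒜 p 0 = ∑ A ∈ 𝒜, p A := by
  rw [pZero, filter_true_of_mem fun A _ => Matrix.mulVec_zero A]

theorem card_biUnion_image_mulVec_pos (h𝒜 : 𝒜.Nonempty) :
    0 < #(𝒜.biUnion fun A => image A.mulVec univ) := by
  obtain ⟨A, hA⟩ := h𝒜
  exact card_pos.2 ⟨A.mulVec 0, mem_biUnion.2 ⟨A, hA, mem_image_of_mem _ (mem_univ 0)⟩⟩

end Ensemble

theorem matrix_product_ensemble_hash_property_general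
    {F : Type} [Field F] [Fintype F] [DecidableEq F]
    (lA lB n : ℕ)
    (𝒜 : Finset (Matrix (Fin lA) (Fin n) F))
    (pA : Matrix (Fin lA) (Fin n) F → ℝ)
    (ℬ : Finset (Matrix (Fin lB) (Fin n) F))
    (pB : Matrix (Fin lB) (Fin n) F → ℝ)
    (hpA0 : ∀ A, 0 ≤ pA A) (hpA1 : ∑ A ∈ 𝒜, pA A = 1)
    (hpB0 : ∀ B, 0 ≤ pB B) (hpB1 : ∑ B ∈ ℬ, pB B = 1)
    (ImA : Finset (Fin lA → F)) (ImB : Finset (Fin lB → F))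
    (hImA : ImA = 𝒜.biUnion (fun A => Finset.image A.mulVec Finset.univ))
    (hImB : ImB = ℬ.biUnion (fun B => Finset.image B.mulVec Finset.univ))
    (Hhat : Finset (Fin n → F))
    (hHne : Hhat.Nonempty)
    (αA βA αB βB : ℝ)
    (hαA : αA = (ImA.card : ℝ) * Hhat.sup' hHne (pZero 𝒜 pA))
    (hβA : βA = ∑ u ∈ Finset.univ.filter
        (fun u : Fin n → F => u ≠ 0 ∧ u ∉ Hhat), pZero 𝒜 pA u)
    (hαB : αB = (ImB.card : ℝ) * Hhat.sup' hHne (pZero ℬ pB))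
    (hβB : βB = ∑ u ∈ Finset.univ.filter
        (fun u : Fin n → F => u ≠ 0 ∧ u ∉ Hhat), pZero ℬ pB u) :
    ∀ T T' : Finset (Fin n → F),
      (∑ u ∈ T, ∑ u' ∈ T',
        ∑ A ∈ 𝒜.filter (fun A => A.mulVec u = A.mulVec u'),
          ∑ B ∈ ℬ.filter (fun B => B.mulVec u = B.mulVec u'),
            pA A * pB B)
      ≤ ((T ∩ T').card : ℝ)
        + (T.card : ℝ) * (T'.card : ℝ) * (αA * αB)
            / ((ImA.card : ℝ) * (ImB.card : ℝ))
        + (min T.card T'.card : ℝ) * (min βA βB) := by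
  intro T T'
  set sA := Hhat.sup' hHne (pZero 𝒜 pA)
  set sB := Hhat.sup' hHne (pZero ℬ pB)
  have hsA : 0 ≤ sA := (pZero_nonneg hpA0 _).trans (le_sup' _ hHne.choose_spec)
  have hsB : 0 ≤ sB := (pZero_nonneg hpB0 _).trans (le_sup' _ hHne.choose_spec)
  have hα : αA * αB / ((ImA.card : ℝ) * (ImB.card : ℝ)) = sA * sB := by
    have h𝒜 : 𝒜.Nonempty := nonempty_of_sum_ne_zero (hpA1 ▸ one_ne_zero)
    have hℬ : ℬ.Nonempty := nonempty_of_sum_ne_zero (hpB1 ▸ one_ne_zero)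
    have hA : (ImA.card : ℝ) ≠ 0 := by
      subst hImA; exact_mod_cast (card_biUnion_image_mulVec_pos h𝒜).ne'
    have hB : (ImB.card : ℝ) ≠ 0 := by
      subst hImB; exact_mod_cast (card_biUnion_image_mulVec_pos hℬ).ne'
    rw [hαA, hαB]
    field_simp
  have hβ : ∑ v ∈ univ.filter (fun v : Fin n → F => v ≠ 0 ∧ v ∉ Hhat),
      pZero 𝒜 pA v * pZero ℬ pB v ≤ min βA βB := by
    rw [hβA, hβB]
    refine le_min (sum_le_sum fun v _ => ?_) (sum_le_sum fun v _ => ?_)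
    · exact mul_le_of_le_one_right (pZero_nonneg hpA0 v) (hpB1 ▸ pZero_le_sum hpB0 v)
    · exact mul_le_of_le_one_left (pZero_nonneg hpB0 v) (hpA1 ▸ pZero_le_sum hpA0 v)
  calc _ = ∑ u ∈ T, ∑ u' ∈ T', pZero 𝒜 pA (u - u') * pZero ℬ pB (u - u') := by
        simp_rw [← sum_mul_sum, sum_filter_mulVec_eq_eq_pZero_sub]
    _ ≤ #(T ∩ T') + #T * #T' * (sA * sB) + min #T #T' * min βA βB := by
        refine (sum_sum_sub_le_of_forall_mem_le (f := fun v => pZero 𝒜 pA v * pZero ℬ pB v)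
          (fun v => mul_nonneg (pZero_nonneg hpA0 v) (pZero_nonneg hpB0 v)) ?_
          (fun v hv => mul_le_mul (le_sup' _ hv) (le_sup' _ hv) (pZero_nonneg hpB0 v) hsA)
          (mul_nonneg hsA hsB) T T').trans ?_
        · simp [pZero_zero, hpA1, hpB1]
        · gcongr
    _ = _ := by rw [mul_div_assoc, hα, Nat.cast_min]

/-- Lemma 9 of the paper: for two independent matrix ensembles over a finite
    field whose annihilation probabilities depend only on the type, with hash
    constants (α_A,β_A) and (α_B,β_B) defined from the average spectrum over a
    common set Ĥ of (nonzero, type-closed) high-weight vectors, the product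
    ensemble u ↦ (Au, Bu) satisfies the hash inequality with constants
    α_{AB} = α_A α_B and β_{AB} = min{β_A, β_B}. -/
theorem matrix_product_ensemble_hash_property
    {F : Type} [Field F] [Fintype F] [DecidableEq F]
    (lA lB n : ℕ)
    (𝒜 : Finset (Matrix (Fin lA) (Fin n) F))
    (pA : Matrix (Fin lA) (Fin n) F → ℝ)
    (ℬ : Finset (Matrix (Fin lB) (Fin n) F))
    (pB : Matrix (Fin lB) (Fin n) F → ℝ)
    (hpA0 : ∀ A, 0 ≤ pA A) (hpA1 : ∑ A ∈ 𝒜, pA A = 1)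
    (hpB0 : ∀ B, 0 ≤ pB B) (hpB1 : ∑ B ∈ ℬ, pB B = 1)
    (ImA : Finset (Fin lA → F)) (ImB : Finset (Fin lB → F))
    (hImA : ImA = 𝒜.biUnion (fun A => Finset.image A.mulVec Finset.univ))
    (hImB : ImB = ℬ.biUnion (fun B => Finset.image B.mulVec Finset.univ))
    (hdepA : ∀ u u' : Fin n → F, vecType u = vecType u' →
      pZero 𝒜 pA u = pZero 𝒜 pA u')
    (hdepB : ∀ u u' : Fin n → F, vecType u = vecType u' →
      pZero ℬ pB u = pZero ℬ pB u')
    (Hhat : Finset (Fin n → F))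
    (hHne : Hhat.Nonempty)
    (hH0 : (0 : Fin n → F) ∉ Hhat)
    (hHclosed : ∀ u ∈ Hhat, ∀ u' : Fin n → F, vecType u' = vecType u → u' ∈ Hhat)
    (αA βA αB βB : ℝ)
    (hαA : αA = (ImA.card : ℝ) * Hhat.sup' hHne (pZero 𝒜 pA))
    (hβA : βA = ∑ u ∈ Finset.univ.filter
        (fun u : Fin n → F => u ≠ 0 ∧ u ∉ Hhat), pZero 𝒜 pA u)
    (hαB : αB = (ImB.card : ℝ) * Hhat.sup' hHne (pZero ℬ pB))
    (hβB : βB = ∑ u ∈ Finset.univ.filter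
        (fun u : Fin n → F => u ≠ 0 ∧ u ∉ Hhat), pZero ℬ pB u)
    (hhashA : ∀ T T' : Finset (Fin n → F),
      (∑ u ∈ T, ∑ u' ∈ T',
        ∑ A ∈ 𝒜.filter (fun A => A.mulVec u = A.mulVec u'), pA A)
      ≤ ((T ∩ T').card : ℝ)
        + (T.card : ℝ) * (T'.card : ℝ) * αA / (ImA.card : ℝ)
        + (min T.card T'.card : ℝ) * βA)
    (hhashB : ∀ T T' : Finset (Fin n → F),
      (∑ u ∈ T, ∑ u' ∈ T',
        ∑ B ∈ ℬ.filter (fun B => B.mulVec u = B.mulVec u'), pB B)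
      ≤ ((T ∩ T').card : ℝ)
        + (T.card : ℝ) * (T'.card : ℝ) * αB / (ImB.card : ℝ)
        + (min T.card T'.card : ℝ) * βB) :
    ∀ T T' : Finset (Fin n → F),
      (∑ u ∈ T, ∑ u' ∈ T',
        ∑ A ∈ 𝒜.filter (fun A => A.mulVec u = A.mulVec u'),
          ∑ B ∈ ℬ.filter (fun B => B.mulVec u = B.mulVec u'),
            pA A * pB B)
      ≤ ((T ∩ T').card : ℝ)
        + (T.card : ℝ) * (T'.card : ℝ) * (αA * αB)
            / ((ImA.card : ℝ) * (ImB.card : ℝ))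
        + (min T.card T'.card : ℝ) * (min βA βB) :=
  matrix_product_ensemble_hash_property_general lA lB n 𝒜 pA ℬ pB hpA0 hpA1 hpB0 hpB1 ImA ImB hImA
    hImB Hhat hHne αA βA αB βB hαA hβA hαB hβB
end

section
/- For the ensemble of l×n sparse matrices over GF(q) generated by the column-wise procedure (each column receives τ additions of a uniformly random nonzero field element at a uniformly random row position), the probability p_A({A : Au = 0}) depends on u only through the Hamming weight w of u, and equals (1/q^l) Σ_{k=0}^{l} (1 − qk/((q−1)l))^{wτ} C(l,k) (q−1)^k. -/
/-!
For a primitive additive character `ψ` of `F`, `𝟙[v = 0] = q⁻ˡ ∑_b ψ (b ⬝ᵥ v)`.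
Since `b ⬝ᵥ A u = ∑_{i,t} b_{j i t} a_{i t} u_i`, the average of `ψ (b ⬝ᵥ A u)` over the
ensemble splits into `n τ` independent averages of `ψ (b_j a u_i)` over a uniform `(j, a)`;
each is `1` when `u_i = 0` and `1 - q k / ((q - 1) l)` otherwise, `k` being the Hamming weight
of `b`. Grouping the `b` by weight, there being `C(l, k) (q - 1)^k` of weight `k`, gives the
formula.
-/

open scoped Classical BigOperators

/-- The sparse matrix determined by the random choices
    s i t = (row position, nonzero element) of the t-th addition in column i. -/
noncomputable def sparseMat {F : Type} [Field F] [Fintype F] [DecidableEq F]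
    (l n τ : ℕ) (s : Fin n → Fin τ → Fin l × {a : F // a ≠ 0}) :
    Matrix (Fin l) (Fin n) F :=
  fun j i => ∑ t : Fin τ, if (s i t).1 = j then ((s i t).2 : F) else 0

open Finset Matrix

section HammingWeight

variable {ι β : Type*} [Fintype ι] [DecidableEq ι] [Fintype β] [DecidableEq β] [Zero β]

theorem card_filter_support_eq (T : Finset ι) :
    #{x : ι → β | ({i | x i ≠ 0} : Finset ι) = T} = (Fintype.card β - 1) ^ #T := by
  have hfiber : ({x : ι → β | ({i | x i ≠ 0} : Finset ι) = T} : Finset (ι → β)) =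
      Fintype.piFinset fun i => if i ∈ T then univ.erase 0 else {0} := by
    ext x
    simp only [mem_filter, mem_univ, true_and, Fintype.mem_piFinset, Finset.ext_iff]
    refine forall_congr' fun i => ?_
    by_cases hi : i ∈ T <;> simp [hi]
  simp only [hfiber, Fintype.card_piFinset, apply_ite card, card_erase_of_mem (mem_univ _),
    card_singleton, card_univ]
  rw [prod_ite_mem, univ_inter, prod_const]

theorem sum_comp_hammingNorm {R : Type*} [AddCommMonoid R] (g : ℕ → R) :
    ∑ x : ι → β, g (hammingNorm x) =
      ∑ k ∈ range (Fintype.card ι + 1),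
        ((Fintype.card ι).choose k * (Fintype.card β - 1) ^ k) • g k := by
  rw [← sum_fiberwise_of_maps_to (g := fun x : ι → β => ({i | x i ≠ 0} : Finset ι))
    (t := (univ : Finset ι).powerset) (fun _ _ => mem_powerset.2 (subset_univ _))]
  have hfiber : ∀ T ∈ (univ : Finset ι).powerset,
      ∑ x : ι → β with ({i | x i ≠ 0} : Finset ι) = T, g (hammingNorm x) =
        (Fintype.card β - 1) ^ #T • g #T := by
    intro T _
    rw [← card_filter_support_eq T, ← sum_const]
    exact sum_congr rfl fun x hx => by rw [hammingNorm, (mem_filter.1 hx).2]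
  rw [sum_congr rfl hfiber, sum_powerset_apply_card (fun k => (Fintype.card β - 1) ^ k • g k),
    card_univ]
  simp only [smul_smul]

end HammingWeight

namespace AddChar

variable {A M : Type*} [AddCommMonoid A] [CommMonoid M]

theorem map_sum_eq_prod (ψ : AddChar A M) {ι : Type*} (s : Finset ι) (f : ι → A) :
    ψ (∑ i ∈ s, f i) = ∏ i ∈ s, ψ (f i) := by
  induction s using Finset.cons_induction with
  | empty => simp
  | cons a s ha ih => rw [sum_cons, prod_cons, map_add_eq_mul, ih]

variable {F R : Type*} [CommRing F] [Fintype F] [DecidableEq F] [CommRing R] [IsDomain R]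
  {ψ : AddChar F R}

theorem sum_apply_dotProduct_eq_ite (hψ : ψ.IsPrimitive) {ι : Type*} [Fintype ι]
    [DecidableEq ι] (v : ι → F) :
    ∑ b : ι → F, ψ (b ⬝ᵥ v) =
      if v = 0 then (Fintype.card F : R) ^ Fintype.card ι else 0 := by
  simp only [dotProduct, map_sum_eq_prod]
  rw [← Fintype.prod_sum fun j c => ψ (c * v j)]
  simp only [sum_mulShift _ hψ, Nat.cast_ite, Nat.cast_zero]
  by_cases hv : v = 0
  · simp [hv]
  · obtain ⟨j, hj⟩ := Function.ne_iff.1 hv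
    rw [if_neg hv]
    exact prod_eq_zero (mem_univ j) (if_neg hj)

theorem card_filter_eq_zero_mul_pow (hψ : ψ.IsPrimitive) {α ι : Type*} [Fintype α] [Fintype ι]
    [DecidableEq ι] (f : α → ι → F) :
    (#{x | f x = 0} : R) * (Fintype.card F : R) ^ Fintype.card ι =
      ∑ x, ∑ b : ι → F, ψ (b ⬝ᵥ f x) := by
  simp only [sum_apply_dotProduct_eq_ite hψ, sum_ite, sum_const_zero, add_zero, sum_const,
    nsmul_eq_mul]

theorem sum_ne_zero_apply_mul (hψ : ψ.IsPrimitive) (c : F) :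
    ∑ a : {a : F // a ≠ 0}, ψ (c * a) =
      (if c = 0 then (Fintype.card F : R) else 0) - 1 := by
  have h := sum_mulShift (ψ := ψ) c hψ
  rw [Fintype.sum_eq_add_sum_subtype_ne _ 0, zero_mul, map_zero_eq_one, Nat.cast_ite,
    Nat.cast_zero] at h
  simp only [mul_comm c, ← h, add_sub_cancel_left]

theorem sum_prod_ne_zero_apply_mul (hψ : ψ.IsPrimitive) {ι : Type*} [Fintype ι] (c : ι → F) :
    ∑ p : ι × {a : F // a ≠ 0}, ψ (c p.1 * p.2) =
      Fintype.card F * #{j | c j = 0} - Fintype.card ι := by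
  rw [Fintype.sum_prod_type]
  simp only [sum_ne_zero_apply_mul hψ, sum_sub_distrib, sum_ite, sum_const_zero, add_zero,
    sum_const, card_univ, nsmul_eq_mul, mul_one, mul_comm (#{j | c j = 0} : R)]

end AddChar

theorem Fintype.sum_prod_prod_eq_prod_pow {α β γ R : Type*} [Fintype α] [DecidableEq α]
    [Fintype β] [DecidableEq β] [Fintype γ] [CommSemiring R] (f : α → γ → R) :
    ∑ s : α → β → γ, ∏ i, ∏ t, f i (s i t) =
      ∏ i, (∑ c, f i c) ^ Fintype.card β := by
  rw [← Fintype.prod_sum fun i (si : β → γ) => ∏ t, f i (si t)]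
  simp only [← Fintype.prod_sum, prod_const, card_univ]

section SparseMatrix

variable {F : Type} [Field F] [Fintype F] [DecidableEq F] {l n τ : ℕ}

theorem vecMul_sparseMat (s : Fin n → Fin τ → Fin l × {a : F // a ≠ 0}) (b : Fin l → F)
    (i : Fin n) : (b ᵥ* sparseMat l n τ s) i = ∑ t, b (s i t).1 * (s i t).2 := by
  simp only [Matrix.vecMul, dotProduct, sparseMat, mul_sum, mul_ite, mul_zero]
  rw [sum_comm]
  simp

theorem card_sparseMat_mulVec_eq_zero_mul_pow (u : Fin n → F) :
    (#{s : Fin n → Fin τ → Fin l × {a : F // a ≠ 0} | sparseMat l n τ s *ᵥ u = 0} :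
        ℝ) *
        (Fintype.card F : ℝ) ^ l =
      ∑ b : Fin l → F, ∏ i, ((Fintype.card F : ℝ) * #{j | b j * u i = 0} - l) ^ τ := by
  let ψ := AddChar.FiniteField.primitiveChar_to_Complex F
  have hψ : ψ.IsPrimitive := AddChar.FiniteField.primitiveChar_to_Complex_isPrimitive F
  apply Complex.ofReal_injective
  push_cast
  calc _ = ∑ s : Fin n → Fin τ → Fin l × {a : F // a ≠ 0}, ∑ b : Fin l → F,
        ψ (b ⬝ᵥ (sparseMat l n τ s *ᵥ u)) := by
        simpa using AddChar.card_filter_eq_zero_mul_pow hψ fun s => sparseMat l n τ s *ᵥ u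
    _ = ∑ b : Fin l → F, ∑ s : Fin n → Fin τ → Fin l × {a : F // a ≠ 0},
        ∏ i, ∏ t, ψ (b (s i t).1 * u i * (s i t).2) := by
        rw [sum_comm]
        refine sum_congr rfl fun b _ => sum_congr rfl fun s _ => ?_
        rw [dotProduct_mulVec, dotProduct]
        simp only [vecMul_sparseMat, sum_mul, AddChar.map_sum_eq_prod,
          mul_right_comm _ _ (u _)]
    _ = _ := by
        refine sum_congr rfl fun b _ => ?_
        refine (Fintype.sum_prod_prod_eq_prod_pow fun i (p : Fin l × {a : F // a ≠ 0}) =>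
          ψ (b p.1 * u i * p.2)).trans ?_
        refine prod_congr rfl fun i _ => ?_
        have hcolumn := AddChar.sum_prod_ne_zero_apply_mul hψ fun j => b j * u i
        simp only [Fintype.card_fin] at hcolumn
        rw [hcolumn, Fintype.card_fin]

/-- The left-hand side is the average of `ψ (b j * c * a)` over uniform `(j, a) : Fin l × Fˣ`. -/
theorem normalizedCharSum_eq_ite (hl : 0 < l) (b : Fin l → F) (c : F) :
    ((Fintype.card F : ℝ) * #{j | b j * c = 0} - l) / (l * (Fintype.card F - 1)) =
      if c = 0 then (1 : ℝ)
      else 1 - Fintype.card F * hammingNorm b / ((Fintype.card F - 1) * l) := by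
  have hq : (Fintype.card F : ℝ) - 1 ≠ 0 :=
    sub_ne_zero.2 (by exact_mod_cast Fintype.one_lt_card.ne')
  have hl' : (l : ℝ) ≠ 0 := by exact_mod_cast hl.ne'
  split_ifs with hc
  · simp only [hc, mul_zero, filter_true, card_univ, Fintype.card_fin]
    field_simp
  · have hzeros : (#{j | b j * c = 0} : ℝ) = l - hammingNorm b := by
      simp only [mul_eq_zero, hc, or_false, hammingNorm]
      rw [eq_sub_iff_add_eq]
      exact_mod_cast (card_filter_add_card_filter_not _).trans (card_fin l)
    rw [hzeros]
    field_simp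
    ring

theorem prod_normalizedCharSum_pow (hl : 0 < l) (b : Fin l → F) (u : Fin n → F) :
    ∏ i, (((Fintype.card F : ℝ) * #{j | b j * u i = 0} - l) / (l * (Fintype.card F - 1))) ^ τ =
      (1 - Fintype.card F * hammingNorm b / ((Fintype.card F - 1) * l)) ^ (hammingNorm u * τ) := by
  simp only [normalizedCharSum_eq_ite hl, ite_pow, one_pow]
  rw [prod_ite, prod_const_one, one_mul, prod_const, ← pow_mul, mul_comm τ]
  rfl

end SparseMatrix

/-- Lemma 12 of the paper: for the ensemble of l×n sparse matrices over GF(q)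
    generated by τ additions of a uniformly random nonzero element at a
    uniformly random row in each column, the probability that Au = 0 depends
    on u only through its Hamming weight w and equals
    (1/q^l) Σ_{k=0}^{l} (1 − qk/((q−1)l))^{wτ} C(l,k) (q−1)^k. -/
theorem sparse_matrix_annihilation_probability
    {F : Type} [Field F] [Fintype F] [DecidableEq F]
    (l n τ : ℕ) (hl : 1 ≤ l) (u : Fin n → F) :
    (((Finset.univ.filter
        (fun s : Fin n → Fin τ → Fin l × {a : F // a ≠ 0} =>
          (sparseMat l n τ s).mulVec u = 0)).card : ℝ)
      / ((l : ℝ) * ((Fintype.card F : ℝ) - 1)) ^ (n * τ))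
    = (1 / (Fintype.card F : ℝ) ^ l) *
        ∑ k ∈ Finset.range (l + 1),
          (1 - (Fintype.card F : ℝ) * (k : ℝ)
              / (((Fintype.card F : ℝ) - 1) * (l : ℝ)))
            ^ ((Finset.univ.filter (fun i : Fin n => u i ≠ 0)).card * τ) *
          (l.choose k : ℝ) *
          ((Fintype.card F : ℝ) - 1) ^ k := by
  change _ = _ * ∑ k ∈ _, _ ^ (hammingNorm u * τ) * _ * _
  have hcount := card_sparseMat_mulVec_eq_zero_mul_pow (l := l) (τ := τ) u
  set q : ℝ := (Fintype.card F : ℝ) with hq_def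
  have hq : q ≠ 0 := Nat.cast_ne_zero.2 Fintype.card_ne_zero
  have hD : (l * (q - 1)) ^ (n * τ) = ∏ _i : Fin n, ((l : ℝ) * (q - 1)) ^ τ := by
    rw [prod_const, card_univ, Fintype.card_fin, ← pow_mul, mul_comm τ]
  calc _ = 1 / q ^ l * ∑ b : Fin l → F,
        ∏ i, ((q * #{j | b j * u i = 0} - l) / (l * (q - 1))) ^ τ := by
        simp only [div_pow, prod_div_distrib, ← sum_div, ← hD, ← hcount]
        field_simp
    _ = 1 / q ^ l * ∑ b : Fin l → F,
        (1 - q * hammingNorm b / ((q - 1) * l)) ^ (hammingNorm u * τ) :=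
        congrArg _ (sum_congr rfl fun b _ => prod_normalizedCharSum_pow hl b u)
    _ = _ := by
        rw [sum_comp_hammingNorm (fun k => (1 - q * k / ((q - 1) * l)) ^ (hammingNorm u * τ)),
          Fintype.card_fin]
        refine congrArg _ (sum_congr rfl fun k _ => ?_)
        rw [nsmul_eq_mul, Nat.cast_mul, Nat.cast_pow, Nat.cast_sub Fintype.card_pos, Nat.cast_one,
          ← hq_def]
        ring
end

section
/- For the sparse-matrix ensemble over GF(q) with even column weight τ, the image set Im A := ⋃_A {Au : u ∈ GF(q)^n} (union over matrices A with positive probability) equals the set of even-weight vectors in GF(2)^l when q = 2, and equals all of GF(q)^l when q > 2. Consequently |Im A|/q^l = 1/2 if q = 2 and 1 if q > 2. -/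
/-!
Over GF(2) every nonzero entry is 1, so each column of a realizable matrix sums to τ = 0 and
`A u` has coordinate sum 0, i.e. even weight. Conversely, prefixing the pair `(j, 1), (j, -1)`
does not change a column, so every two-entry column `a e_j + b e_k` (a, b ≠ 0) is realizable
with τ entries, and unused columns can be given coefficient 0. A zero-sum `c` is
`∑ c_j (e_j - e_0)`; when q > 2, picking `x ∉ {0, 1}` gives `e_j = x e_j + (1 - x) e_j`, so every
`c` is reached. The zero-sum vectors form the kernel of the surjective map `c ↦ ∑ c_j`, which has
index q.
-/

open scoped Classical BigOperators

/-- The image set Im 𝒜 = ⋃_A { Au : u } of the sparse ensemble, as a Finset. -/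
noncomputable def sparseIm {F : Type} [Field F] [Fintype F] [DecidableEq F]
    (l n τ : ℕ) : Finset (Fin l → F) :=
  Finset.univ.filter (fun c : Fin l → F =>
    ∃ (s : Fin n → Fin τ → Fin l × {a : F // a ≠ 0}) (u : Fin n → F),
      (sparseMat l n τ s).mulVec u = c)

theorem card_filter_sum_eq_zero_mul_card {ι G : Type*} [Fintype ι] [DecidableEq ι] [Nonempty ι]
    [AddCommGroup G] [Fintype G] :
    (Finset.univ.filter (fun c : ι → G => ∑ j, c j = 0)).card * Fintype.card G
      = Fintype.card G ^ Fintype.card ι := by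
  let f : (ι → G) →+ G := ∑ j, Pi.evalAddMonoidHom (fun _ => G) j
  have hf : ∀ c, f c = ∑ j, c j := fun c => by simp [f]
  have hsurj : Function.Surjective f := fun y =>
    ⟨Pi.single (Classical.arbitrary ι) y, by simp [hf]⟩
  have h := f.ker.card_mul_index
  rw [AddSubgroup.index_ker, f.range_eq_top.mpr hsurj, AddSubgroup.card_top] at h
  simp only [Nat.card_eq_fintype_card, Fintype.card_fun] at h
  rw [← h, ← Fintype.card_subtype]
  congr 1
  exact Fintype.card_congr (Equiv.subtypeEquivRight fun c => by simp [hf])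

section SparseColumns

variable {F : Type} [Field F] {l τ : ℕ}

def sparseCol (σ : Fin τ → Fin l × {a : F // a ≠ 0}) : Fin l → F :=
  ∑ t, Pi.single (σ t).1 ((σ t).2 : F)

theorem sum_sparseCol (σ : Fin τ → Fin l × {a : F // a ≠ 0}) :
    ∑ j, sparseCol σ j = ∑ t, ((σ t).2 : F) := by
  simp [sparseCol, Finset.sum_apply, Finset.sum_comm (γ := Fin l)]

theorem sparseCol_cons_cons (σ : Fin τ → Fin l × {a : F // a ≠ 0}) (j : Fin l) :
    sparseCol (Fin.cons (j, ⟨1, one_ne_zero⟩) (Fin.cons (j, ⟨-1, neg_ne_zero.2 one_ne_zero⟩) σ))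
      = sparseCol σ := by
  simp [sparseCol, Fin.sum_univ_succ, ← add_assoc, ← Pi.single_add]

theorem exists_sparseCol_eq_single_add_single (hτ0 : 0 < τ) (hτ : Even τ) (j k : Fin l)
    (a b : {a : F // a ≠ 0}) :
    ∃ σ : Fin τ → Fin l × {a : F // a ≠ 0}, sparseCol σ = Pi.single j (a : F) + Pi.single k b := by
  obtain ⟨m, rfl⟩ : ∃ m, τ = 2 * m + 2 := ⟨τ / 2 - 1, by obtain ⟨r, rfl⟩ := hτ; omega⟩
  clear hτ0 hτ
  induction m with
  | zero => exact ⟨![(j, a), (k, b)], by simp [sparseCol]⟩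
  | succ m ih =>
    obtain ⟨σ, hσ⟩ := ih
    exact ⟨Fin.cons (j, ⟨1, one_ne_zero⟩) (Fin.cons (j, ⟨-1, neg_ne_zero.2 one_ne_zero⟩) σ),
      by rw [sparseCol_cons_cons, hσ]⟩

variable [Fintype F] [DecidableEq F] {n : ℕ}

theorem mulVec_sparseMat (s : Fin n → Fin τ → Fin l × {a : F // a ≠ 0}) (u : Fin n → F) :
    (sparseMat l n τ s).mulVec u = ∑ i, u i • sparseCol (s i) := by
  ext j
  simp [Matrix.mulVec, dotProduct, sparseMat, sparseCol, Finset.sum_apply, Pi.single_apply,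
    mul_comm, eq_comm]

theorem mem_sparseIm_iff {c : Fin l → F} :
    c ∈ sparseIm l n τ ↔ ∃ (s : Fin n → Fin τ → Fin l × {a : F // a ≠ 0}) (u : Fin n → F),
      ∑ i, u i • sparseCol (s i) = c := by
  simp [sparseIm, mulVec_sparseMat]

theorem sparseIm_mono (hl : 0 < l) {m : ℕ} (hmn : m ≤ n) :
    sparseIm (F := F) l m τ ⊆ sparseIm l n τ := by
  obtain ⟨k, rfl⟩ := Nat.exists_eq_add_of_le hmn
  intro c hc
  obtain ⟨s, u, rfl⟩ := mem_sparseIm_iff.1 hc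
  refine mem_sparseIm_iff.2 ⟨Fin.append s fun _ _ => (⟨0, hl⟩, ⟨1, one_ne_zero⟩),
    Fin.append u 0, ?_⟩
  simp [Fin.sum_univ_add]

theorem sum_smul_single_add_single_mem_sparseIm (hτ0 : 0 < τ) (hτ : Even τ) (j k : Fin n → Fin l)
    (a b : Fin n → {a : F // a ≠ 0}) (u : Fin n → F) :
    ∑ i, u i • (Pi.single (j i) (a i : F) + Pi.single (k i) (b i : F) : Fin l → F)
      ∈ sparseIm l n τ := by
  choose σ hσ using fun i => exists_sparseCol_eq_single_add_single hτ0 hτ (j i) (k i) (a i) (b i)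
  exact mem_sparseIm_iff.2 ⟨σ, u, by simp only [hσ]⟩

end SparseColumns

section Image

variable {F : Type} [Field F] [Fintype F] [DecidableEq F] {l n τ : ℕ}

theorem mem_sparseIm_of_sum_eq_zero (hl : 0 < l) (hln : l ≤ n) (hτ0 : 0 < τ) (hτ : Even τ)
    {c : Fin l → F} (hc : ∑ j, c j = 0) : c ∈ sparseIm l n τ := by
  have hdecomp : ∑ i, c i • (Pi.single i 1 + Pi.single ⟨0, hl⟩ (-1) : Fin l → F) = c := by
    simp [smul_add, Finset.sum_add_distrib, ← Finset.sum_smul, hc, ← pi_eq_sum_univ' c]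
  refine sparseIm_mono hl hln ?_
  simpa only [id_eq, hdecomp] using sum_smul_single_add_single_mem_sparseIm hτ0 hτ id
    (fun _ => ⟨0, hl⟩) (fun _ => ⟨1, one_ne_zero⟩) (fun _ => ⟨-1, neg_ne_zero.2 one_ne_zero⟩) c

theorem sparseIm_eq_univ_of_two_lt_card (hl : 0 < l) (hln : l ≤ n) (hτ0 : 0 < τ) (hτ : Even τ)
    (hF : 2 < Fintype.card F) : sparseIm (F := F) l n τ = Finset.univ := by
  obtain ⟨x, -, hx⟩ := Finset.exists_mem_notMem_of_card_lt_card (s := {0, 1})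
    (t := (Finset.univ : Finset F)) ((Finset.card_le_two).trans_lt hF)
  simp only [Finset.mem_insert, Finset.mem_singleton, not_or] at hx
  have hdecomp : ∀ c : Fin l → F,
      ∑ i, c i • (Pi.single i x + Pi.single i (1 - x) : Fin l → F) = c := fun c => by
    simp [← Pi.single_add, ← pi_eq_sum_univ' c]
  refine Finset.eq_univ_of_forall fun c => sparseIm_mono hl hln ?_
  simpa only [id_eq, hdecomp] using sum_smul_single_add_single_mem_sparseIm hτ0 hτ id id
    (fun _ => ⟨x, hx.1⟩) (fun _ => ⟨1 - x, sub_ne_zero.2 (Ne.symm hx.2)⟩) c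

end Image

section CharTwo

variable {F : Type} [Field F] [Fintype F] (hF : Fintype.card F = 2)
include hF

theorem eq_one_of_card_eq_two {x : F} (hx : x ≠ 0) : x = 1 := by
  simpa [hF] using FiniteField.pow_card_sub_one_eq_one x hx

theorem natCast_eq_zero_iff_even_of_card_eq_two (k : ℕ) : (k : F) = 0 ↔ Even k := by
  have : Fact (Nat.Prime 2) := ⟨Nat.prime_two⟩
  have := charP_of_card_eq_prime hF
  rw [CharP.cast_eq_zero_iff F 2, even_iff_two_dvd]

theorem sum_eq_zero_iff_even_card {ι : Type*} [Fintype ι] (c : ι → F) :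
    ∑ j, c j = 0 ↔ Even (Finset.univ.filter (fun j => c j ≠ 0)).card := by
  rw [← Finset.sum_filter_ne_zero, Finset.sum_congr rfl fun j hj =>
    eq_one_of_card_eq_two hF (Finset.mem_filter.1 hj).2, Finset.sum_const, nsmul_one,
    natCast_eq_zero_iff_even_of_card_eq_two hF]

theorem sum_sparseCol_eq_zero {l τ : ℕ} (hτ : Even τ) (σ : Fin τ → Fin l × {a : F // a ≠ 0}) :
    ∑ j, sparseCol σ j = 0 := by
  rw [sum_sparseCol, Finset.sum_congr rfl fun t _ => eq_one_of_card_eq_two hF (σ t).2.2,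
    Finset.sum_const, nsmul_one, Finset.card_univ, Fintype.card_fin,
    natCast_eq_zero_iff_even_of_card_eq_two hF]
  exact hτ

theorem sum_eq_zero_of_mem_sparseIm [DecidableEq F] {l n τ : ℕ} (hτ : Even τ) {c : Fin l → F}
    (hc : c ∈ sparseIm l n τ) : ∑ j, c j = 0 := by
  obtain ⟨s, u, rfl⟩ := mem_sparseIm_iff.1 hc
  simp [Finset.sum_apply, Finset.sum_comm (γ := Fin l), ← Finset.mul_sum,
    sum_sparseCol_eq_zero hF hτ]

end CharTwo

/-- Lemma 13 of the paper: for the sparse ensemble with even column weight τ,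
    Im 𝒜 is the set of even-weight vectors when q = 2 and all of GF(q)^l when
    q > 2; consequently |Im 𝒜|/q^l equals 1/2 resp. 1. -/
theorem sparse_matrix_image
    {F : Type} [Field F] [Fintype F] [DecidableEq F]
    (l n τ : ℕ) (hl : 1 ≤ l) (hln : l ≤ n) (hτpos : 0 < τ) (hτ : Even τ) :
    (Fintype.card F = 2 →
      sparseIm (F := F) l n τ
        = Finset.univ.filter (fun c : Fin l → F =>
            Even (Finset.univ.filter (fun j : Fin l => c j ≠ 0)).card)
      ∧ ((sparseIm (F := F) l n τ).card : ℝ) / (Fintype.card F : ℝ) ^ l = 1 / 2)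
    ∧ (2 < Fintype.card F →
      sparseIm (F := F) l n τ = Finset.univ
      ∧ ((sparseIm (F := F) l n τ).card : ℝ) / (Fintype.card F : ℝ) ^ l = 1) := by
  refine ⟨fun hF => ?_, fun hF => ?_⟩
  · have hIm : sparseIm (F := F) l n τ
        = Finset.univ.filter (fun c : Fin l → F => ∑ j, c j = 0) := by
      ext c
      simp only [Finset.mem_filter, Finset.mem_univ, true_and]
      exact ⟨sum_eq_zero_of_mem_sparseIm hF hτ, mem_sparseIm_of_sum_eq_zero hl hln hτpos hτ⟩
    have : Nonempty (Fin l) := ⟨⟨0, hl⟩⟩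
    have hcard : ((Finset.univ.filter (fun c : Fin l → F => ∑ j, c j = 0)).card : ℝ)
        * Fintype.card F = (Fintype.card F : ℝ) ^ l := by
      exact_mod_cast Fintype.card_fin l ▸ card_filter_sum_eq_zero_mul_card (ι := Fin l) (G := F)
    refine ⟨by ext c; simp [hIm, sum_eq_zero_iff_even_card hF], ?_⟩
    rw [hIm, div_eq_div_iff (by positivity) two_ne_zero, ← hcard, hF]
    ring
  · have hIm := sparseIm_eq_univ_of_two_lt_card hl hln hτpos hτ hF
    refine ⟨hIm, ?_⟩
    rw [hIm, Finset.card_univ, Fintype.card_fun, Fintype.card_fin, Nat.cast_pow,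
      div_self (by positivity)]
end
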